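/- Let Z be a set of k distinct points in ℙ² over an algebraically closed field, not all contained in a line, with k ≥ 4, and let p ∈ ℙ² be a point not in Z. Then the points of Z ∪ {p} impose independent conditions on curves of degree k−1; that is, the space of homogeneous forms of degree k−1 in three variables vanishing on Z ∪ {p} has codimension k+1 in the space of forms of degree k−1 vanishing nowhere imposed, i.e., h⁰(I_{Z∪{p}}(k−1)) = binom(k+1,2) − (k+1). In particular p is not a base point of the linear system of degree-(k−1) curves through Z. -/

import Mathlib

open MvPolynomial Finset

section Helpers
variable {K : Type*} [Field K]

noncomputable def dotL (v : Fin 3 → K) : (Fin 3 → K) →ₗ[K] K where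
  toFun y := ∑ i, v i * y i
  map_add' y z := by simp [mul_add, Finset.sum_add_distrib]
  map_smul' c y := by simp [Finset.mul_sum, mul_left_comm]

@[simp] lemma dotL_apply (v y : Fin 3 → K) : dotL v y = ∑ i, v i * y i := rfl

lemma dotL_comm (v y : Fin 3 → K) : dotL v y = dotL y v := by
  simp [mul_comm]

noncomputable def linForm (v : Fin 3 → K) : MvPolynomial (Fin 3) K :=
  ∑ i, MvPolynomial.C (v i) * MvPolynomial.X i

lemma linForm_isHomogeneous (v : Fin 3 → K) : (linForm v).IsHomogeneous 1 := by
  apply IsHomogeneous.sum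
  intro i _
  simpa using (isHomogeneous_C (Fin 3) (v i)).mul (isHomogeneous_X K i)

lemma aeval_linForm (v x : Fin 3 → K) : MvPolynomial.aeval x (linForm v) = ∑ i, v i * x i := by
  simp [linForm]

lemma linForm_ne_zero {v : Fin 3 → K} (hv : v ≠ 0) : linForm v ≠ 0 := by
  intro h
  apply hv
  funext i
  have := aeval_linForm v (Pi.single i 1)
  rw [h] at this
  simpa [Pi.single_apply, Finset.sum_ite_eq', mul_comm] using this.symm

lemma exists_dot {W : Submodule K (Fin 3 → K)} {x : Fin 3 → K} (hx : x ∉ W) :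
    ∃ v : Fin 3 → K, (∀ w ∈ W, ∑ i, v i * w i = 0) ∧ ∑ i, v i * x i ≠ 0 := by
  have hxq : W.mkQ x ≠ 0 := by
    simpa [Submodule.Quotient.mk_eq_zero] using hx
  obtain ⟨f, hf⟩ : ∃ f : Module.Dual K (_ ⧸ W), f (W.mkQ x) ≠ 0 := by
    by_contra h
    push_neg at h
    exact hxq ((Module.forall_dual_apply_eq_zero_iff K _).mp h)
  set g : (Fin 3 → K) →ₗ[K] K := f ∘ₗ W.mkQ with hg
  have key : ∀ y : Fin 3 → K, g y = ∑ i, g (Pi.single i 1) * y i := by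
    intro y
    have hy : y = ∑ i, y i • (Pi.single i 1 : Fin 3 → K) := by
      funext j; simp [Pi.single_apply, Finset.sum_apply]
    conv_lhs => rw [hy]
    rw [map_sum]
    simp [mul_comm]
  refine ⟨fun i => g (Pi.single i 1), fun w hw => ?_, ?_⟩
  · rw [← key]
    simp [hg, (Submodule.Quotient.mk_eq_zero W).mpr hw]
  · rw [← key]
    exact hf

lemma degree_eq_card_toMultiset (d : Fin 3 →₀ ℕ) :
    d.degree = Multiset.card (Finsupp.toMultiset d) := by
  rw [Finsupp.card_toMultiset]
  rfl

noncomputable def degSetEquivSym (n : ℕ) :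
    {d : Fin 3 →₀ ℕ // d.degree = n} ≃ Sym (Fin 3) n where
  toFun d := ⟨Finsupp.toMultiset d.1, by rw [← degree_eq_card_toMultiset]; exact d.2⟩
  invFun s := ⟨Multiset.toFinsupp s.1, by
    rw [degree_eq_card_toMultiset, Multiset.toFinsupp_toMultiset]; exact s.2⟩
  left_inv d := by simp
  right_inv s := Subtype.ext (by simp)

noncomputable instance degSetFintype (n : ℕ) : Fintype {d : Fin 3 →₀ ℕ // d.degree = n} :=
  Fintype.ofEquiv _ (degSetEquivSym n).symm

lemma card_degSet (n : ℕ) :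
    Fintype.card {d : Fin 3 →₀ ℕ // d.degree = n} = (n + 2).choose 2 := by
  rw [Fintype.card_congr (degSetEquivSym n), Sym.card_sym_eq_multichoose,
    Nat.multichoose_eq]
  simp only [Fintype.card_fin]
  have h1 : 3 + n - 1 = n + 2 := by omega
  rw [h1, ← Nat.choose_symm (by omega : n ≤ n + 2)]
  congr 1
  omega

noncomputable def homogEquiv (n : ℕ) :
    ↥(homogeneousSubmodule (Fin 3) K n) ≃ₗ[K] ({d : Fin 3 →₀ ℕ | d.degree = n} →₀ K) :=
  (LinearEquiv.ofEq _ _ (homogeneousSubmodule_eq_finsupp_supported (σ := Fin 3) (R := K) n)).trans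
    (AddMonoidAlgebra.supportedEquivFinsupp _)

instance homogFD (n : ℕ) : FiniteDimensional K ↥(homogeneousSubmodule (Fin 3) K n) := by
  have : Fintype {d : Fin 3 →₀ ℕ | d.degree = n} := degSetFintype n
  exact Module.Finite.equiv (homogEquiv n).symm

lemma finrank_homog (n : ℕ) :
    Module.finrank K ↥(homogeneousSubmodule (Fin 3) K n) = (n + 2).choose 2 := by
  have : Fintype {d : Fin 3 →₀ ℕ | d.degree = n} := degSetFintype n
  rw [LinearEquiv.finrank_eq (homogEquiv (K := K) n), Module.finrank_finsupp_self, ← card_degSet n]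
  exact Fintype.card_congr (Equiv.refl _)

end Helpers

theorem stmt13 (K : Type*) [Field K] [IsAlgClosed K] (k : ℕ) (hk : 4 ≤ k)
    (p : Fin k → (Fin 3 → K)) (hp0 : ∀ i, p i ≠ 0)
    (hdist : ∀ i j, i ≠ j → ∀ c : K, p i ≠ c • p j)
    (hnotline : ¬ ∃ ℓ : MvPolynomial (Fin 3) K, ℓ.IsHomogeneous 1 ∧ ℓ ≠ 0 ∧
      ∀ i, MvPolynomial.aeval (p i) ℓ = 0)
    (q : Fin 3 → K) (hq0 : q ≠ 0) (hq : ∀ i, ∀ c : K, q ≠ c • p i) :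
    Module.finrank K
        ↥(MvPolynomial.homogeneousSubmodule (Fin 3) K (k - 1) ⊓
          (⨅ i, LinearMap.ker (MvPolynomial.aeval (p i)).toLinearMap) ⊓
          LinearMap.ker (MvPolynomial.aeval q).toLinearMap) =
      Nat.choose (k + 1) 2 - (k + 1) := by
  classical
  set n := k - 1 with hn
  set P : Fin (k + 1) → (Fin 3 → K) := Fin.snoc p q with hPdef
  have hPcast : ∀ i : Fin k, P i.castSucc = p i := fun i => Fin.snoc_castSucc _ _ _
  have hPlast : P (Fin.last k) = q := Fin.snoc_last _ _
  have hP0 : ∀ j, P j ≠ 0 := by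
    intro j
    induction j using Fin.lastCases with
    | last => rw [hPlast]; exact hq0
    | cast i => rw [hPcast]; exact hp0 i
  have hPd : ∀ i j, i ≠ j → ∀ c : K, P i ≠ c • P j := by
    intro i j hij c
    induction i using Fin.lastCases with
    | last =>
      induction j using Fin.lastCases with
      | last => exact absurd rfl hij
      | cast j => rw [hPlast, hPcast]; exact hq j c
    | cast i =>
      induction j using Fin.lastCases with
      | last =>
        rw [hPlast, hPcast]
        intro h
        have hc : c ≠ 0 := by
          rintro rfl
          rw [zero_smul] at h
          exact hp0 i h
        refine hq i c⁻¹ ?_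
        rw [h, smul_smul, inv_mul_cancel₀ hc, one_smul]
      | cast j =>
        rw [hPcast, hPcast]
        exact hdist i j (fun h => hij (by rw [h])) c
  have hPline : ¬ ∃ ℓ : MvPolynomial (Fin 3) K, ℓ.IsHomogeneous 1 ∧ ℓ ≠ 0 ∧
      ∀ j, MvPolynomial.aeval (P j) ℓ = 0 := by
    rintro ⟨ℓ, h1, h2, h3⟩
    exact hnotline ⟨ℓ, h1, h2, fun i => by rw [← hPcast i]; exact h3 _⟩
  -- good pairs
  have goodpair : ∀ j, ∃ a b, a ≠ j ∧ b ≠ j ∧ a ≠ b ∧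
      P j ∉ Submodule.span K {P a, P b} := by
    intro j
    by_contra hcon
    push_neg at hcon
    have hnt : Nontrivial (Fin (k + 1)) := Fin.nontrivial_iff_two_le.mpr (by omega)
    obtain ⟨a₀, ha₀⟩ := exists_ne j
    have hall : ∀ m, P m ∈ Submodule.span K {P a₀, P j} := by
      intro m
      by_cases hmj : m = j
      · subst hmj; exact Submodule.subset_span (by simp)
      by_cases hma : m = a₀
      · subst hma; exact Submodule.subset_span (by simp)
      · have hm := hcon a₀ m ha₀ hmj (fun h => hma h.symm)
        rw [Submodule.mem_span_pair] at hm
        obtain ⟨α, β, hab⟩ := hm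
        have hβ : β ≠ 0 := by
          rintro rfl
          rw [zero_smul, add_zero] at hab
          exact hPd j a₀ (Ne.symm ha₀) α hab.symm
        have hβm : β • P m = P j - α • P a₀ := by rw [← hab]; abel
        have hm2 : P m = β⁻¹ • (P j - α • P a₀) := by
          rw [← hβm, smul_smul, inv_mul_cancel₀ hβ, one_smul]
        rw [hm2]
        exact Submodule.smul_mem _ _ (Submodule.sub_mem _
          (Submodule.subset_span (by simp))
          (Submodule.smul_mem _ _ (Submodule.subset_span (by simp))))
    -- find v ≠ 0 orthogonal to P a₀ and P j
    set f : (Fin 3 → K) →ₗ[K] K × K := (dotL (P a₀)).prod (dotL (P j)) with hf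
    have hninj : ¬ Function.Injective f := by
      intro hinj
      have hle := LinearMap.finrank_le_finrank_of_injective hinj
      rw [Module.finrank_pi] at hle
      simp [Module.finrank_prod] at hle
    have hker : LinearMap.ker f ≠ ⊥ := fun h => hninj (LinearMap.ker_eq_bot.mp h)
    obtain ⟨v, hvker, hv0⟩ := Submodule.exists_mem_ne_zero_of_ne_bot hker
    have hfv : dotL (P a₀) v = 0 ∧ dotL (P j) v = 0 := by
      have := (LinearMap.mem_ker (f := f)).mp hvker
      exact ⟨congrArg Prod.fst this, congrArg Prod.snd this⟩
    refine hPline ⟨linForm v, linForm_isHomogeneous v, linForm_ne_zero hv0, fun m => ?_⟩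
    have hvan : Submodule.span K {P a₀, P j} ≤ LinearMap.ker (dotL v) := by
      rw [Submodule.span_le]
      rintro x (rfl | rfl)
      · rw [SetLike.mem_coe, LinearMap.mem_ker, dotL_comm]; exact hfv.1
      · rw [SetLike.mem_coe, LinearMap.mem_ker, dotL_comm]; exact hfv.2
    have := hvan (hall m)
    rw [LinearMap.mem_ker] at this
    rw [aeval_linForm]
    simpa using this
  -- separating polynomials
  have sep : ∀ j, ∃ F : MvPolynomial (Fin 3) K, F.IsHomogeneous n ∧
      MvPolynomial.aeval (P j) F ≠ 0 ∧ ∀ m, m ≠ j → MvPolynomial.aeval (P m) F = 0 := by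
    intro j
    obtain ⟨a, b, haj, hbj, hab, hspan⟩ := goodpair j
    obtain ⟨v₀, hv₀1, hv₀2⟩ := exists_dot hspan
    have hsingle : ∀ m : Fin (k + 1), ∃ v : Fin 3 → K,
        m ≠ j → (∑ i, v i * P m i = 0) ∧ (∑ i, v i * P j i ≠ 0) := by
      intro m
      by_cases hmj : m = j
      · exact ⟨0, fun h => absurd hmj h⟩
      · have hns : P j ∉ Submodule.span K {P m} := by
          rw [Submodule.mem_span_singleton]
          rintro ⟨c, hc⟩
          exact hPd j m (Ne.symm hmj) c hc.symm
        obtain ⟨v, hv1, hv2⟩ := exists_dot hns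
        exact ⟨v, fun _ => ⟨hv1 _ (Submodule.mem_span_singleton_self _), hv2⟩⟩
    choose v hv using hsingle
    set S : Finset (Fin (k + 1)) := ((Finset.univ.erase j).erase a).erase b with hS
    have hbS : b ∈ (Finset.univ.erase j).erase a := by
      simp [Finset.mem_erase, hbj, hab.symm]
    have haS : a ∈ Finset.univ.erase j := by simp [Finset.mem_erase, haj]
    have hjS : j ∈ (Finset.univ : Finset (Fin (k + 1))) := Finset.mem_univ j
    have hScard : S.card = k - 2 := by
      rw [hS, Finset.card_erase_of_mem hbS, Finset.card_erase_of_mem haS,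
        Finset.card_erase_of_mem hjS, Finset.card_univ, Fintype.card_fin]
      omega
    have hSne : ∀ m ∈ S, m ≠ j := by
      intro m hm
      rw [hS] at hm
      simp only [Finset.mem_erase, Finset.mem_univ, and_true] at hm
      exact hm.2.2
    refine ⟨linForm v₀ * ∏ m ∈ S, linForm (v m), ?_, ?_, ?_⟩
    · have h1 : (∏ m ∈ S, linForm (v m)).IsHomogeneous (∑ _m ∈ S, 1) :=
        IsHomogeneous.prod S _ _ (fun m _ => linForm_isHomogeneous (v m))
      rw [Finset.sum_const, smul_eq_mul, mul_one, hScard] at h1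
      have h2 := (linForm_isHomogeneous v₀).mul h1
      have h3 : 1 + (k - 2) = n := by omega
      rwa [h3] at h2
    · rw [map_mul, map_prod]
      apply mul_ne_zero
      · rw [aeval_linForm]; exact hv₀2
      · rw [Finset.prod_ne_zero_iff]
        intro m hm
        rw [aeval_linForm]
        exact (hv m (hSne m hm)).2
    · intro m hm
      rw [map_mul, map_prod]
      by_cases hma : m = a
      · subst hma
        rw [aeval_linForm, hv₀1 _ (Submodule.subset_span (by simp)), zero_mul]
      by_cases hmb : m = b
      · subst hmb
        rw [aeval_linForm, hv₀1 _ (Submodule.subset_span (by simp)), zero_mul]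
      · have hmS : m ∈ S := by
          rw [hS]
          simp [Finset.mem_erase, hm, hma, hmb]
        rw [Finset.prod_eq_zero hmS (by rw [aeval_linForm]; exact (hv m hm).1), mul_zero]
  -- the evaluation map
  set H := MvPolynomial.homogeneousSubmodule (Fin 3) K n with hH
  set E : ↥H →ₗ[K] (Fin (k + 1) → K) :=
    LinearMap.pi (fun j => (MvPolynomial.aeval (P j)).toLinearMap ∘ₗ H.subtype) with hE
  have hEapp : ∀ (F : ↥H) j, E F j = MvPolynomial.aeval (P j) (F : MvPolynomial (Fin 3) K) :=
    fun F j => rfl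
  have hsurj : LinearMap.range E = ⊤ := by
    rw [← top_le_iff, ← (Pi.basisFun K (Fin (k + 1))).span_eq, Submodule.span_le]
    rintro x ⟨j, rfl⟩
    obtain ⟨F, hFh, hFj, hFm⟩ := sep j
    refine ⟨(MvPolynomial.aeval (P j) F)⁻¹ • ⟨F, hFh⟩, ?_⟩
    rw [map_smul]
    funext m
    rw [Pi.smul_apply, hEapp]
    by_cases hmj : m = j
    · subst hmj
      simp [Pi.basisFun_apply, Pi.single_apply, smul_eq_mul, inv_mul_cancel₀ (show MvPolynomial.eval (P m) F ≠ 0 by simpa using hFj)]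
    · simp [Pi.basisFun_apply, Pi.single_apply, hmj, hFm m hmj]
  have hkereq : (MvPolynomial.homogeneousSubmodule (Fin 3) K (k - 1) ⊓
          (⨅ i, LinearMap.ker (MvPolynomial.aeval (p i)).toLinearMap) ⊓
          LinearMap.ker (MvPolynomial.aeval q).toLinearMap)
      = Submodule.map H.subtype (LinearMap.ker E) := by
    ext x
    simp only [Submodule.mem_inf, Submodule.mem_iInf, LinearMap.mem_ker,
      AlgHom.toLinearMap_apply, Submodule.mem_map]
    constructor
    · rintro ⟨⟨hxH, hxp⟩, hxq⟩
      refine ⟨⟨x, hxH⟩, ?_, rfl⟩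
      funext j
      rw [hEapp]
      induction j using Fin.lastCases with
      | last => rw [hPlast]; exact hxq
      | cast i => rw [hPcast]; exact hxp i
    · rintro ⟨⟨y, hy⟩, hEy, rfl⟩
      refine ⟨⟨hy, fun i => ?_⟩, ?_⟩
      · have := congrFun hEy i.castSucc
        rw [hEapp, hPcast] at this
        exact this
      · have := congrFun hEy (Fin.last k)
        rw [hEapp, hPlast] at this
        exact this
  rw [hkereq, Submodule.finrank_map_subtype_eq]
  have hrn := LinearMap.finrank_range_add_finrank_ker E
  rw [hsurj, finrank_top, Module.finrank_pi, Fintype.card_fin] at hrn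
  have hH2 : Module.finrank K ↥H = (k + 1).choose 2 := by
    rw [hH, finrank_homog]
    congr 1
    omega
  rw [hH2] at hrn
  omega
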